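/- A Boolean relation R ⊆ {0,1}^k is bijunctive (equivalent to a 2-CNF) if and only if R is closed under the coordinatewise majority operation: for all a, b, c ∈ R, the tuple maj(a,b,c) with i-th coordinate majority(a_i, b_i, c_i) is in R. -/

import Mathlib

/-!
A clause with at most two literals survives majority: each of three satisfying tuples makes
some literal of the clause true, so by pigeonhole two of them make the same literal true, and
then so does their majority.

Conversely, let `a` satisfy every clause with at most two literals that holds on all of `R`.
For any set `S` of at most two coordinates, some `b ∈ R` agrees with `a` on `S`: otherwise the
clause "differ from `a` somewhere on `S`" holds on `R` but fails at `a`. If `|S| ≥ 3`, pick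
distinct `x, y, z ∈ S` and tuples of `R` agreeing with `a` on `S \ {x}`, `S \ {y}`, `S \ {z}`;
every coordinate of `S` lies in two of these sets, so their majority agrees with `a` on `S`.
Induction on `S` yields a tuple of `R` agreeing with `a` everywhere.
-/

structure Clause (k : ℕ) where
  pos : Finset (Fin k)
  neg : Finset (Fin k)

def Clause.Sat {k : ℕ} (C : Clause k) (a : Fin k → Bool) : Prop :=
  (∃ i ∈ C.pos, a i = true) ∨ (∃ i ∈ C.neg, a i = false)

/-- `majority x y z` is true iff at least two of `x, y, z` are true. -/
def maj (x y z : Bool) : Bool := (x && y) || (x && z) || (y && z)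

theorem maj_eq_of_two_eq {v : Fin 3 → Bool} {s : Bool} {t t' : Fin 3} (htt' : t ≠ t')
    (ht : v t = s) (ht' : v t' = s) : maj (v 0) (v 1) (v 2) = s := by
  revert v s t t'
  decide

section MajorityClosed

variable {ι : Type*} [DecidableEq ι] {R : Set (ι → Bool)}

theorem exists_mem_eqOn_of_maj_closed
    (hR : ∀ a ∈ R, ∀ b ∈ R, ∀ c ∈ R, (fun i => maj (a i) (b i) (c i)) ∈ R) {a : ι → Bool}
    (h₂ : ∀ S : Finset ι, S.card ≤ 2 → ∃ b ∈ R, Set.EqOn b a S) (S : Finset ι) :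
    ∃ b ∈ R, Set.EqOn b a S := by
  induction S using Finset.strongInduction with
  | H S ih =>
    rcases le_or_gt S.card 2 with hS | hS
    · exact h₂ S hS
    obtain ⟨x, hx, y, hy, z, hz, hxy, hxz, hyz⟩ := Finset.two_lt_card.1 hS
    obtain ⟨b₁, hb₁, hab₁⟩ := ih _ (Finset.erase_ssubset hx)
    obtain ⟨b₂, hb₂, hab₂⟩ := ih _ (Finset.erase_ssubset hy)
    obtain ⟨b₃, hb₃, hab₃⟩ := ih _ (Finset.erase_ssubset hz)
    refine ⟨_, hR b₁ hb₁ b₂ hb₂ b₃ hb₃, fun i hi => ?_⟩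
    have agree {b : ι → Bool} {w : ι} (hb : Set.EqOn b a (S.erase w)) (hiw : i ≠ w) :
        b i = a i :=
      hb (Finset.mem_erase.2 ⟨hiw, hi⟩)
    let v : Fin 3 → Bool := ![b₁ i, b₂ i, b₃ i]
    by_cases hix : i = x
    · subst hix
      exact maj_eq_of_two_eq (v := v) (t := 1) (t' := 2) (by decide) (agree hab₂ hxy)
        (agree hab₃ hxz)
    · by_cases hiy : i = y
      · exact maj_eq_of_two_eq (v := v) (t := 0) (t' := 2) (by decide) (agree hab₁ hix)
          (agree hab₃ (hiy ▸ hyz))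
      · exact maj_eq_of_two_eq (v := v) (t := 0) (t' := 1) (by decide) (agree hab₁ hix)
          (agree hab₂ hiy)

end MajorityClosed

namespace Clause

variable {k : ℕ}

instance : Fintype (Clause k) :=
  Fintype.ofEquiv (Finset (Fin k) × Finset (Fin k))
    ⟨fun p => ⟨p.1, p.2⟩, fun C => (C.pos, C.neg), fun _ => rfl, fun _ => rfl⟩

/-- The literals of `C`, with `(i, s)` standing for `x_i = s`. -/
def lits (C : Clause k) : Finset (Fin k × Bool) :=
  C.pos ×ˢ {true} ∪ C.neg ×ˢ {false}

theorem card_lits_le (C : Clause k) : C.lits.card ≤ C.pos.card + C.neg.card :=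
  (Finset.card_union_le _ _).trans_eq (by simp only [Finset.card_product, Finset.card_singleton,
    mul_one])

theorem sat_iff_exists_lit {C : Clause k} {a : Fin k → Bool} :
    C.Sat a ↔ ∃ l ∈ C.lits, a l.1 = l.2 := by
  simp [Sat, lits, or_and_right, exists_or]

theorem sat_maj {C : Clause k} (hC : C.pos.card + C.neg.card ≤ 2) {a b c : Fin k → Bool}
    (ha : C.Sat a) (hb : C.Sat b) (hc : C.Sat c) :
    C.Sat (fun i => maj (a i) (b i) (c i)) := by
  let v : Fin 3 → Fin k → Bool := ![a, b, c]
  have hv : ∀ t, ∃ l ∈ C.lits, v t l.1 = l.2 := by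
    intro t
    fin_cases t
    exacts [sat_iff_exists_lit.1 ha, sat_iff_exists_lit.1 hb, sat_iff_exists_lit.1 hc]
  choose lit hlit hvlit using hv
  have hcard : C.lits.card < (Finset.univ : Finset (Fin 3)).card := by
    simpa using (card_lits_le C).trans_lt (by omega : C.pos.card + C.neg.card < 3)
  obtain ⟨t, -, t', -, htt', hsame⟩ :=
    Finset.exists_ne_map_eq_of_card_lt_of_maps_to hcard (f := lit) fun t _ => hlit t
  exact sat_iff_exists_lit.2 ⟨lit t, hlit t, maj_eq_of_two_eq (v := fun u => v u (lit t).1) htt'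
    (hvlit t) (hsame ▸ hvlit t')⟩

def differ (a : Fin k → Bool) (S : Finset (Fin k)) : Clause k :=
  ⟨{i ∈ S | a i = false}, {i ∈ S | a i = true}⟩

theorem card_differ (a : Fin k → Bool) (S : Finset (Fin k)) :
    (differ a S).pos.card + (differ a S).neg.card = S.card := by
  simpa [differ] using Finset.card_filter_add_card_filter_not (s := S) (fun i => a i = false)

theorem sat_differ_iff {a b : Fin k → Bool} {S : Finset (Fin k)} :
    (differ a S).Sat b ↔ ¬Set.EqOn b a S := by
  simp only [Sat, differ, Finset.mem_filter, Set.EqOn, Finset.mem_coe]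
  push Not
  constructor
  · rintro (⟨i, ⟨hi, hai⟩, hbi⟩ | ⟨i, ⟨hi, hai⟩, hbi⟩) <;> exact ⟨i, hi, by simp [hai, hbi]⟩
  · rintro ⟨i, hi, hne⟩
    cases hai : a i
    · exact .inl ⟨i, ⟨hi, hai⟩, by simpa [hai] using hne⟩
    · exact .inr ⟨i, ⟨hi, hai⟩, by simpa [hai] using hne⟩

end Clause

theorem mem_of_sat_of_maj_closed {k : ℕ} {R : Set (Fin k → Bool)}
    (hR : ∀ a ∈ R, ∀ b ∈ R, ∀ c ∈ R, (fun i => maj (a i) (b i) (c i)) ∈ R) {a : Fin k → Bool}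
    (ha : ∀ C : Clause k, C.pos.card + C.neg.card ≤ 2 → (∀ b ∈ R, C.Sat b) → C.Sat a) :
    a ∈ R := by
  have h₂ (S : Finset (Fin k)) (hS : S.card ≤ 2) : ∃ b ∈ R, Set.EqOn b a S := by
    by_contra! hnone
    exact Clause.sat_differ_iff.1 (ha _ ((Clause.card_differ a S).trans_le hS)
      fun b hb => Clause.sat_differ_iff.2 (hnone b hb)) (Set.eqOn_refl a S)
  obtain ⟨b, hb, hba⟩ := exists_mem_eqOn_of_maj_closed hR h₂ Finset.univ
  rwa [show a = b from funext fun i => (hba (Finset.mem_coe.2 (Finset.mem_univ i))).symm]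

/-- A Boolean relation `R ⊆ {0,1}^k` is bijunctive (the satisfying set of a 2-CNF)
iff it is closed under the coordinatewise majority operation. -/
theorem bijunctive_iff_closed_majority {k : ℕ} (R : Set (Fin k → Bool)) :
    (∃ φ : List (Clause k), (∀ C ∈ φ, C.pos.card + C.neg.card ≤ 2) ∧
        ∀ a : Fin k → Bool, a ∈ R ↔ ∀ C ∈ φ, C.Sat a) ↔
    (∀ a ∈ R, ∀ b ∈ R, ∀ c ∈ R, (fun i => maj (a i) (b i) (c i)) ∈ R) := by
  classical
  constructor
  · rintro ⟨φ, hφ, hR⟩ a ha b hb c hc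
    rw [hR] at ha hb hc ⊢
    exact fun C hC => Clause.sat_maj (hφ C hC) (ha C hC) (hb C hC) (hc C hC)
  · intro hR
    refine ⟨(Finset.univ.filter fun C : Clause k =>
        C.pos.card + C.neg.card ≤ 2 ∧ ∀ b ∈ R, C.Sat b).toList, ?_, fun a => ⟨?_, ?_⟩⟩
    · simp +contextual
    · simp +contextual
    · exact fun ha => mem_of_sat_of_maj_closed hR fun C hC hCR =>
        ha C (Finset.mem_toList.2 (Finset.mem_filter.2 ⟨Finset.mem_univ C, hC, hCR⟩))
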